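/- If e = {x,y} is an edge of G whose endpoints x and y both have vertex-degree two and edge-degree two, then etw(G/e) ≤ etw(G), where G/e is the graph obtained by contracting e. -/

import Mathlib

open Classical

/-- A finite loopless multigraph: a finite vertex type, a finite edge type, and an
endpoint function assigning to every edge an unordered pair of distinct vertices. -/
structure FinMGraph where
  V : Type
  E : Type
  [fV : Fintype V]
  [fE : Fintype E]
  [dV : DecidableEq V]
  ends : E → Sym2 V
  loopless : ∀ e, ¬ (ends e).IsDiag

attribute [instance] FinMGraph.fV FinMGraph.fE FinMGraph.dV

namespace FinMGraph

variable (G : FinMGraph)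

/-- One-step adjacency inside the vertex set `S` (i.e. in the induced subgraph `G[S]`). -/
def stepIn (S : Set G.V) (a b : G.V) : Prop :=
  a ∈ S ∧ b ∈ S ∧ ∃ e : G.E, G.ends e = s(a, b)

/-- The vertex set of the connected component of `v` in the induced subgraph `G[S]`. -/
def comp (S : Set G.V) (v : G.V) : Set G.V :=
  {w | Relation.ReflTransGen (G.stepIn S) v w}

/-- The number of edges (counted with multiplicity) with exactly one endpoint in `X`. -/
noncomputable def cut (X : Set G.V) : ℕ :=
  Nat.card {e : G.E // ∃ a b, G.ends e = s(a, b) ∧ a ∈ X ∧ b ∉ X}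

/-- For a layout `L` (a linear ordering of the vertices) the set `S_i` of vertices
occurring at position `i` or later. -/
def tail (L : Fin (Fintype.card G.V) ≃ G.V) (i : Fin (Fintype.card G.V)) : Set G.V :=
  {v | i ≤ L.symm v}

/-- The cost `δ^ec(i) = |E_G(C_G(S_i, x_i))|` of position `i` in the layout `L`. -/
noncomputable def cost (L : Fin (Fintype.card G.V) ≃ G.V) (i : Fin (Fintype.card G.V)) : ℕ :=
  G.cut (G.comp (G.tail L i) (L i))

/-- The edge-treewidth of `G`: the minimum over all layouts of the maximum cost. -/
noncomputable def etw : ℕ :=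
  sInf {k | ∃ L : Fin (Fintype.card G.V) ≃ G.V, ∀ i, G.cost L i ≤ k}

end FinMGraph

namespace FinMGraph

variable (G : FinMGraph)

/-- `G` is a forest: every edge is a bridge, i.e. after removing an edge its two
endpoints are no longer connected. -/
def IsForest : Prop :=
  ∀ (e : G.E) (a b : G.V), G.ends e = s(a, b) →
    ¬ Relation.ReflTransGen (fun x y => ∃ f : G.E, f ≠ e ∧ G.ends f = s(x, y)) a b

/-- A cycle of length `k` in `G`, given by an injective cyclic sequence of vertices and an
injective sequence of distinct edges joining consecutive vertices. -/
def IsCycleOn (k : ℕ) (v : ZMod k → G.V) (f : ZMod k → G.E) : Prop :=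
  2 ≤ k ∧ Function.Injective v ∧ Function.Injective f ∧
    ∀ i : ZMod k, G.ends (f i) = s(v i, v (i + 1))

/-- `G` is a cactus: every edge belongs to at most one cycle, i.e. any two cycles
sharing an edge have the same edge set. -/
def IsCactus : Prop :=
  ∀ (k₁ : ℕ) (v₁ : ZMod k₁ → G.V) (f₁ : ZMod k₁ → G.E)
    (k₂ : ℕ) (v₂ : ZMod k₂ → G.V) (f₂ : ZMod k₂ → G.E),
    G.IsCycleOn k₁ v₁ f₁ → G.IsCycleOn k₂ v₂ f₂ →
    (∃ e, e ∈ Set.range f₁ ∧ e ∈ Set.range f₂) → Set.range f₁ = Set.range f₂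

/-- A walk from `a` to `b` using the listed edges, in order. -/
inductive Walk : G.V → G.V → List G.E → Prop
  | nil (v : G.V) : Walk v v []
  | cons {a b c : G.V} {e : G.E} {es : List G.E} :
      G.ends e = s(a, b) → Walk b c es → Walk a c (e :: es)

/-- `H` is a subgraph of `G`. -/
def IsSubgraphOf (H : FinMGraph) : Prop :=
  ∃ (φ : H.V ↪ G.V) (ψ : H.E ↪ G.E), ∀ e, G.ends (ψ e) = (H.ends e).map φ

/-- The edge-degree of `v`: the number of incident edges, counted with multiplicity. -/
noncomputable def edeg (v : G.V) : ℕ :=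
  Nat.card {e : G.E // v ∈ G.ends e}

/-- The vertex-degree of `v`: the number of distinct neighbours of `v`. -/
noncomputable def vdeg (v : G.V) : ℕ :=
  Nat.card {w : G.V // w ≠ v ∧ ∃ e : G.E, G.ends e = s(v, w)}

/-- `H` is obtained from `G` by contracting one edge `e = {x,y}` whose endpoints both
have vertex-degree two and edge-degree two. -/
def ContractStep (H : FinMGraph) : Prop :=
  ∃ (x y : G.V) (e : G.E), G.ends e = s(x, y) ∧
    G.vdeg x = 2 ∧ G.edeg x = 2 ∧ G.vdeg y = 2 ∧ G.edeg y = 2 ∧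
    ∃ (φ : G.V → H.V) (ψ : {f : G.E // f ≠ e} ≃ H.E),
      Function.Surjective φ ∧
      (∀ v w : G.V, φ v = φ w ↔ (v = w ∨ (v = x ∧ w = y) ∨ (v = y ∧ w = x))) ∧
      ∀ f : {f : G.E // f ≠ e}, H.ends (ψ f) = (G.ends f.1).map φ

/-- `H` is a weak topological minor of `G`: `H` is obtained from a subgraph of `G` by
repeatedly contracting edges whose endpoints have vertex-degree two and edge-degree two. -/
def IsWeakTopMinorOf (H G : FinMGraph) : Prop :=
  ∃ S : FinMGraph, S.IsSubgraphOf G ∧ Relation.ReflTransGen FinMGraph.ContractStep S H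

/-- The induced subgraph `G[S]` is connected. -/
def ConnectedOn (S : Set G.V) : Prop :=
  ∀ a ∈ S, ∀ b ∈ S, Relation.ReflTransGen (G.stepIn S) a b

/-- `G` is connected. -/
def Connected : Prop := G.ConnectedOn Set.univ

/-- `G` is biconnected: nonempty and removing any single vertex leaves it connected. -/
def Biconnected : Prop :=
  Nonempty G.V ∧ ∀ v : G.V, G.ConnectedOn {w | w ≠ v}

/-- The minimum cost over layouts whose first vertex is `u`. -/
noncomputable def etwFrom (u : G.V) : ℕ :=
  sInf {k | ∃ L : Fin (Fintype.card G.V) ≃ G.V, (L.symm u : ℕ) = 0 ∧ ∀ i, G.cost L i ≤ k}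

/-- The sub-multigraph of `G` on the same vertex set whose edges are those in `F`. -/
noncomputable def restrictE (F : Set G.E) : FinMGraph :=
  { V := G.V, E := {e : G.E // e ∈ F}, ends := fun e => G.ends e.1,
    loopless := fun e => G.loopless e.1 }

/-- Two edges lie in a common block: they are equal or some cycle contains both. -/
def SameBlock (e f : G.E) : Prop :=
  e = f ∨ ∃ (k : ℕ) (v : ZMod k → G.V) (g : ZMod k → G.E),
    G.IsCycleOn k v g ∧ e ∈ Set.range g ∧ f ∈ Set.range g

/-- The block of `G` containing the edge `e`. -/
noncomputable def blockOf (e : G.E) : FinMGraph :=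
  G.restrictE {f | G.SameBlock e f}

/-- The number of vertices outside `X` having a neighbour in `X`. -/
noncomputable def ncut (X : Set G.V) : ℕ :=
  Nat.card {v : G.V // v ∉ X ∧ ∃ x ∈ X, ∃ e : G.E, G.ends e = s(v, x)}

/-- Treewidth, via its layout characterization: the minimum over layouts of the
maximum of `|N_G(C_G(S_i, x_i))|`. -/
noncomputable def twl : ℕ :=
  sInf {k | ∃ L : Fin (Fintype.card G.V) ≃ G.V,
    ∀ i, G.ncut (G.comp (G.tail L i) (L i)) ≤ k}

/-- The maximum edge-degree of `G`. -/
noncomputable def maxEdeg : ℕ :=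
  sSup {m | ∃ v : G.V, m = G.edeg v}

end FinMGraph

/-- A tree-layout of `G`: a rooted tree (given by a parent function under which every
node eventually reaches the root) together with an injective mapping `τ` of the vertices
of `G` into the nodes such that the endpoints of every edge are mapped to comparable
(ancestor/descendant) nodes. -/
structure TreeLayout (G : FinMGraph) where
  T : Type
  par : T → T
  root : T
  par_root : par root = root
  reaches_root : ∀ t : T, ∃ n : ℕ, par^[n] t = root
  τ : G.V → T
  inj : Function.Injective τ
  comparable : ∀ (e : G.E) (a b : G.V), G.ends e = s(a, b) →
    (∃ n : ℕ, par^[n] (τ a) = τ b) ∨ (∃ n : ℕ, par^[n] (τ b) = τ a)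

/-- The set `X_T(u)` of vertices of `G` mapped to descendants of the node `u`. -/
def TreeLayout.region {G : FinMGraph} (TL : TreeLayout G) (u : TL.T) : Set G.V :=
  {x | ∃ n : ℕ, TL.par^[n] (TL.τ x) = u}

/-- The theta graph `θ k`: two vertices joined by `k` parallel edges. -/
def theta (k : ℕ) : FinMGraph :=
  { V := Fin 2, E := Fin k, ends := fun _ => s((0 : Fin 2), 1),
    loopless := fun _ => by rw [Sym2.mk_isDiag_iff]; decide }

/-- The cycle on `n ≥ 2` vertices. -/
def cyc (n : ℕ) (h : 2 ≤ n) : FinMGraph :=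
  letI : NeZero n := ⟨by omega⟩
  letI : Fact (1 < n) := ⟨h⟩
  { V := ZMod n, E := ZMod n, ends := fun i => s(i, i + 1),
    loopless := fun i => by
      rw [Sym2.mk_isDiag_iff]
      exact fun hh => one_ne_zero (left_eq_add.mp hh) }

/-- The multigraph `Z_n^3`, obtained from the cycle on `n ≥ 2` vertices by doubling
every edge. -/
def Z3 (n : ℕ) (h : 2 ≤ n) : FinMGraph :=
  letI : NeZero n := ⟨by omega⟩
  letI : Fact (1 < n) := ⟨h⟩
  { V := ZMod n, E := ZMod n × Fin 2, ends := fun p => s(p.1, p.1 + 1),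
    loopless := fun p => by
      rw [Sym2.mk_isDiag_iff]
      exact fun hh => one_ne_zero (left_eq_add.mp hh) }

/-!
Take a layout of `G` of minimal cost in which, say, `x` precedes `y`, and delete `y` from it to
obtain a layout of `G/e`. At every position the tail `S` of `G` either contains both `x` and `y`
or misses `x`. In the first case the component in `G/e` is the image of the component in `G`,
and its cut edges come from cut edges in `G`. In the second case it is the image of the
component of `S \ {y}`; since `y` has edge-degree two and its neighbour `x` lies outside `S`,
removing `y` from `S` creates at most one new cut edge and removes the cut edge `e`.
-/

lemma Sym2.exists_mk_of_map_eq_mk {α β : Type*} {f : α → β} {z : Sym2 α} {a' b' : β}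
    (h : z.map f = s(a', b')) : ∃ a b, z = s(a, b) ∧ f a = a' ∧ f b = b' := by
  induction z using Sym2.ind with
  | h a b =>
    rcases Sym2.eq_iff.1 h with ⟨ha, hb⟩ | ⟨ha, hb⟩
    · exact ⟨a, b, rfl, ha, hb⟩
    · exact ⟨b, a, Sym2.eq_swap, hb, ha⟩

lemma exists_equiv_fin_symm_le_iff {α β : Type*} [Fintype β] {n : ℕ} (L : Fin n ≃ α)
    (g : β → α) (hg : Function.Injective g) :
    ∃ L' : Fin (Fintype.card β) ≃ β,
      ∀ a b, L'.symm a ≤ L'.symm b ↔ L.symm (g a) ≤ L.symm (g b) := by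
  let _ : LinearOrder β := LinearOrder.lift' (fun b => L.symm (g b)) (L.symm.injective.comp hg)
  exact ⟨(Fintype.orderIsoFinOfCardEq β rfl).toEquiv,
    fun a b => (Fintype.orderIsoFinOfCardEq β rfl).symm.le_iff_le⟩

namespace FinMGraph

variable {G H : FinMGraph}

def Crosses (G : FinMGraph) (X : Set G.V) (f : G.E) : Prop :=
  ∃ a b, G.ends f = s(a, b) ∧ a ∈ X ∧ b ∉ X

lemma cut_le_cut {X : Set H.V} {Y : Set G.V} (F : H.E → G.E)
    (hcross : ∀ f, H.Crosses X f → G.Crosses Y (F f))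
    (hinj : ∀ f₁ f₂, H.Crosses X f₁ → H.Crosses X f₂ → F f₁ = F f₂ → f₁ = f₂) :
    H.cut X ≤ G.cut Y :=
  Nat.card_le_card_of_injective (fun f => ⟨F f.1, hcross f.1 f.2⟩)
    fun f₁ f₂ h => Subtype.ext (hinj f₁.1 f₂.1 f₁.2 f₂.2 (congrArg Subtype.val h))

lemma comp_subset {S : Set G.V} {v : G.V} (hv : v ∈ S) : G.comp S v ⊆ S := by
  intro a ha
  rcases Relation.ReflTransGen.cases_tail ha with rfl | ⟨_, _, hstep⟩
  · exact hv
  · exact hstep.2.1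

lemma comp_mono {S T : Set G.V} (hST : S ⊆ T) (v : G.V) : G.comp S v ⊆ G.comp T v :=
  fun _ ha => Relation.ReflTransGen.mono (fun _ _ h => ⟨hST h.1, hST h.2.1, h.2.2⟩) _ _ ha

lemma mem_comp_of_ends {S : Set G.V} {v a b : G.V} {f : G.E} (hv : v ∈ S)
    (ha : a ∈ G.comp S v) (hb : b ∈ S) (hf : G.ends f = s(a, b)) : b ∈ G.comp S v :=
  Relation.ReflTransGen.tail ha ⟨comp_subset hv ha, hb, f, hf⟩

lemma eq_of_edeg_le_two {y : G.V} {e f₁ f₂ : G.E} (hy : G.edeg y ≤ 2) (he : y ∈ G.ends e)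
    (h₁ : y ∈ G.ends f₁) (h₂ : y ∈ G.ends f₂) (he₁ : f₁ ≠ e) (he₂ : f₂ ≠ e) : f₁ = f₂ := by
  by_contra h₁₂
  have hthree : ({e, f₁, f₂} : Set G.E).ncard = 3 :=
    Set.ncard_eq_three.2 ⟨e, f₁, f₂, he₁.symm, he₂.symm, h₁₂, rfl⟩
  have hsub : ({e, f₁, f₂} : Set G.E) ⊆ {f | y ∈ G.ends f} := by
    rintro f (rfl | rfl | rfl) <;> assumption
  have hcard : G.edeg y = ({f | y ∈ G.ends f} : Set G.E).ncard := Nat.card_coe_set_eq _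
  have := Set.ncard_le_ncard hsub
  omega

lemma ne_of_ends {x y : G.V} {e : G.E} (he : G.ends e = s(x, y)) : x ≠ y :=
  fun h => G.loopless e (by rw [he, h]; exact Sym2.mk_isDiag_iff.2 rfl)

lemma mem_comp_iff_of_ends {S : Set G.V} {v x y : G.V} {e : G.E} (he : G.ends e = s(x, y))
    (hS : x ∈ S ↔ y ∈ S) (hv : v ∈ S) : x ∈ G.comp S v ↔ y ∈ G.comp S v := by
  constructor <;> intro h
  · exact mem_comp_of_ends hv h (hS.1 (comp_subset hv h)) he
  · exact mem_comp_of_ends hv h (hS.2 (comp_subset hv h)) (he.trans Sym2.eq_swap)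

/-- The only edge that can newly leave the component is the second edge at `y`; it is paid for
by `e`, which leaves `G.comp S v` as soon as `y` lies in it. -/
lemma cut_comp_diff_singleton_le {S : Set G.V} {v x y : G.V} {e : G.E}
    (he : G.ends e = s(x, y)) (hx : x ∉ S) (hy : G.edeg y ≤ 2) (hv : v ∈ S) (hvy : v ≠ y) :
    G.cut (G.comp (S \ {y}) v) ≤ G.cut (G.comp S v) := by
  by_cases hyS : y ∉ S
  · rw [Set.sdiff_singleton_eq_self hyS]
  rw [not_not] at hyS
  have hv' : v ∈ S \ {y} := ⟨hv, hvy⟩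
  have hsub : G.comp (S \ {y}) v ⊆ G.comp S v := comp_mono Set.sdiff_subset v
  have hne_e : ∀ f, G.Crosses (G.comp (S \ {y}) v) f → f ≠ e := by
    rintro f ⟨a, b, hf, ha, -⟩ rfl
    rw [he] at hf
    have hxy : a = x ∨ a = y := by
      rcases Sym2.eq_iff.1 hf with ⟨h, -⟩ | ⟨-, h⟩ <;> simp [← h]
    have := comp_subset hv' ha
    rcases hxy with rfl | rfl
    · exact hx this.1
    · exact this.2 rfl
  refine cut_le_cut (fun f => if y ∈ G.ends f then e else f) ?_ ?_
  · rintro f ⟨a, b, hf, ha, hb⟩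
    have ha' := comp_subset hv' ha
    split_ifs with hyf
    · have hb_y : b = y := by
        rw [hf, Sym2.mem_iff] at hyf
        exact (hyf.resolve_left fun h => ha'.2 h.symm).symm
      subst hb_y
      exact ⟨b, x, by rw [he, Sym2.eq_swap],
        mem_comp_of_ends hv (hsub ha) hyS hf, fun h => hx (comp_subset hv h)⟩
    · refine ⟨a, b, hf, hsub ha, fun hbC => hb ?_⟩
      have hby : b ≠ y := by rintro rfl; exact hyf (by rw [hf]; exact Sym2.mem_mk_right a b)
      exact mem_comp_of_ends hv' ha ⟨comp_subset hv hbC, hby⟩ hf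
  · intro f₁ f₂ h₁ h₂ h
    have hye : y ∈ G.ends e := by rw [he]; exact Sym2.mem_mk_right x y
    split_ifs at h with hy₁ hy₂ hy₂
    · exact eq_of_edeg_le_two hy hye hy₁ hy₂ (hne_e f₁ h₁) (hne_e f₂ h₂)
    · exact absurd h.symm (hne_e f₂ h₂)
    · exact absurd h (hne_e f₁ h₁)
    · exact h

structure Contraction (G H : FinMGraph) (x y : G.V) (e : G.E) where
  φ : G.V → H.V
  ψ : {f : G.E // f ≠ e} ≃ H.E
  ends_e : G.ends e = s(x, y)
  surjective : Function.Surjective φ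
  φ_eq_iff : ∀ v w, φ v = φ w ↔ (v = w ∨ (v = x ∧ w = y) ∨ (v = y ∧ w = x))
  ends_ψ : ∀ f, H.ends (ψ f) = (G.ends f.1).map φ

namespace Contraction

variable {x y : G.V} {e : G.E} (c : Contraction G H x y e)

def symm : Contraction G H y x e where
  φ := c.φ
  ψ := c.ψ
  ends_e := c.ends_e.trans Sym2.eq_swap
  surjective := c.surjective
  φ_eq_iff v w := (c.φ_eq_iff v w).trans (by tauto)
  ends_ψ := c.ends_ψ

lemma φ_x_eq_φ_y : c.φ x = c.φ y := (c.φ_eq_iff x y).2 (Or.inr (Or.inl ⟨rfl, rfl⟩))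

lemma exists_section : ∃ g : H.V → G.V, ∀ w, g w ≠ y ∧ c.φ (g w) = w := by
  choose g hg using fun w => c.surjective w
  refine ⟨fun w => if g w = y then x else g w, fun w => ?_⟩
  dsimp only
  split_ifs with h
  · exact ⟨ne_of_ends c.ends_e, c.φ_x_eq_φ_y.trans (by rw [← hg w, h])⟩
  · exact ⟨h, hg w⟩

lemma exists_ends_eq {f : H.E} {a' b' : H.V} (hf : H.ends f = s(a', b')) :
    ∃ a b, G.ends (c.ψ.symm f).1 = s(a, b) ∧ c.φ a = a' ∧ c.φ b = b' :=
  Sym2.exists_mk_of_map_eq_mk (by rw [← c.ends_ψ, c.ψ.apply_symm_apply, hf])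

lemma φ_eq_or_exists_ends {f : G.E} {a b : G.V} (hf : G.ends f = s(a, b)) :
    c.φ a = c.φ b ∨ ∃ f' : H.E, H.ends f' = s(c.φ a, c.φ b) := by
  by_cases hfe : f = e
  · subst hfe
    rw [c.ends_e] at hf
    left
    rcases Sym2.eq_iff.1 hf with ⟨rfl, rfl⟩ | ⟨rfl, rfl⟩
    exacts [c.φ_x_eq_φ_y, c.φ_x_eq_φ_y.symm]
  · exact Or.inr ⟨c.ψ ⟨f, hfe⟩, by rw [c.ends_ψ, hf, Sym2.map_mk]⟩

variable {S : Set G.V}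

lemma φ_mem_image_iff (hS : x ∈ S ↔ y ∈ S) {b : G.V} : c.φ b ∈ c.φ '' S ↔ b ∈ S := by
  refine ⟨fun ⟨a, ha, hab⟩ => ?_, fun hb => ⟨b, hb, rfl⟩⟩
  rcases (c.φ_eq_iff a b).1 hab with rfl | ⟨rfl, rfl⟩ | ⟨rfl, rfl⟩
  exacts [ha, hS.1 ha, hS.2 ha]

lemma preimage_eq_image {g : H.V → G.V} (hg : ∀ w, c.φ (g w) = w) (hS : x ∈ S ↔ y ∈ S) :
    g ⁻¹' S = c.φ '' S := by
  ext w
  refine ⟨fun h => ⟨g w, h, hg w⟩, ?_⟩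
  rintro ⟨a, ha, rfl⟩
  exact (c.φ_mem_image_iff hS).1 (by rw [hg]; exact ⟨a, ha, rfl⟩)

lemma comp_image (hS : x ∈ S ↔ y ∈ S) {v : G.V} (hv : v ∈ S) :
    H.comp (c.φ '' S) (c.φ v) = c.φ '' G.comp S v := by
  ext w
  constructor
  · intro hw
    induction hw with
    | refl => exact ⟨v, Relation.ReflTransGen.refl, rfl⟩
    | tail _ hstep ih =>
      obtain ⟨a, haC, rfl⟩ := ih
      obtain ⟨-, hb, f, hf⟩ := hstep
      obtain ⟨a₁, b₁, hf₁, ha₁, rfl⟩ := c.exists_ends_eq hf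
      have hC := c.φ_mem_image_iff (mem_comp_iff_of_ends c.ends_e hS hv) (b := a₁)
      refine ⟨b₁, mem_comp_of_ends hv (hC.1 ?_) ((c.φ_mem_image_iff hS).1 hb) hf₁, rfl⟩
      rw [ha₁]; exact ⟨a, haC, rfl⟩
  · rintro ⟨a, ha, rfl⟩
    induction ha with
    | refl => exact Relation.ReflTransGen.refl
    | tail _ hstep ih =>
      obtain ⟨ha, hb, f, hf⟩ := hstep
      rcases c.φ_eq_or_exists_ends hf with h | ⟨f', hf'⟩
      · rwa [← h]
      · exact ih.tail ⟨⟨_, ha, rfl⟩, ⟨_, hb, rfl⟩, f', hf'⟩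

lemma cut_image_le {C : Set G.V} (hC : x ∈ C ↔ y ∈ C) : H.cut (c.φ '' C) ≤ G.cut C := by
  refine cut_le_cut (fun f => (c.ψ.symm f).1) ?_
    fun f₁ f₂ _ _ h => c.ψ.symm.injective (Subtype.ext h)
  rintro f ⟨a', b', hf, ⟨a, ha, rfl⟩, hb⟩
  obtain ⟨a₁, b₁, hf₁, ha₁, rfl⟩ := c.exists_ends_eq hf
  exact ⟨a₁, b₁, hf₁, (c.φ_mem_image_iff hC).1 (ha₁ ▸ ⟨a, ha, rfl⟩),
    fun h => hb ⟨b₁, h, rfl⟩⟩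

/-- If `x` lies in the tail `S` of `L`, the tail of `L'` is the image of `S`; otherwise it is
the image of `S \ {y}`, which is handled by `cut_comp_diff_singleton_le`. -/
lemma cost_le (hy : G.edeg y ≤ 2) {g : H.V → G.V} (hg : ∀ w, g w ≠ y ∧ c.φ (g w) = w)
    {L : Fin (Fintype.card G.V) ≃ G.V} {L' : Fin (Fintype.card H.V) ≃ H.V}
    (hL : ∀ a b, L'.symm a ≤ L'.symm b ↔ L.symm (g a) ≤ L.symm (g b))
    (hxy : L.symm x < L.symm y) (i : Fin (Fintype.card H.V)) :
    H.cost L' i ≤ G.cost L (L.symm (g (L' i))) := by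
  have hφg : ∀ w, c.φ (g w) = w := fun w => (hg w).2
  set v := g (L' i)
  have htail : H.tail L' i = g ⁻¹' G.tail L (L.symm v) := by
    ext w
    change i ≤ L'.symm w ↔ L.symm v ≤ L.symm (g w)
    rw [← hL, L'.symm_apply_apply]
  have hLi : L' i = c.φ v := (hφg _).symm
  rw [cost, cost, htail, hLi, L.apply_symm_apply]
  set S := G.tail L (L.symm v)
  have hv : v ∈ S := le_refl (L.symm v)
  by_cases hxS : x ∈ S
  · have hS : x ∈ S ↔ y ∈ S := ⟨fun _ => le_trans hxS hxy.le, fun _ => hxS⟩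
    rw [c.preimage_eq_image hφg hS, c.comp_image hS hv]
    exact c.cut_image_le (mem_comp_iff_of_ends c.ends_e hS hv)
  · have hS : x ∈ S \ {y} ↔ y ∈ S \ {y} := by simp [hxS]
    have hv' : v ∈ S \ {y} := ⟨hv, (hg _).1⟩
    have hpre : g ⁻¹' S = g ⁻¹' (S \ {y}) := by
      ext w; simp [(hg w).1]
    rw [hpre, c.preimage_eq_image hφg hS, c.comp_image hS hv']
    exact (c.cut_image_le (mem_comp_iff_of_ends c.ends_e hS hv')).trans
      (cut_comp_diff_singleton_le c.ends_e hxS hy hv (hg _).1)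

end Contraction

lemma Contraction.exists_layout_cost_le {x y : G.V} {e : G.E} (c : Contraction G H x y e)
    (hx : G.edeg x ≤ 2) (hy : G.edeg y ≤ 2)
    (L : Fin (Fintype.card G.V) ≃ G.V) :
    ∃ L' : Fin (Fintype.card H.V) ≃ H.V, ∀ i, ∃ j, H.cost L' i ≤ G.cost L j := by
  wlog hxy : L.symm x < L.symm y generalizing x y
  · exact this c.symm hy hx (lt_of_le_of_ne (not_lt.1 hxy)
      fun h => ne_of_ends c.ends_e (L.symm.injective h).symm)
  obtain ⟨g, hg⟩ := c.exists_section
  obtain ⟨L', hL⟩ := exists_equiv_fin_symm_le_iff L g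
    (Function.LeftInverse.injective fun w => (hg w).2)
  exact ⟨L', fun i => ⟨_, c.cost_le hy hg hL hxy i⟩⟩

lemma exists_layout_cost_le_etw (G : FinMGraph) :
    ∃ L : Fin (Fintype.card G.V) ≃ G.V, ∀ i, G.cost L i ≤ G.etw := by
  have hne : {k | ∃ L : Fin (Fintype.card G.V) ≃ G.V, ∀ i, G.cost L i ≤ k}.Nonempty :=
    ⟨Nat.card G.E, (Fintype.equivFin G.V).symm,
      fun _ => Nat.card_le_card_of_injective Subtype.val Subtype.val_injective⟩
  exact Nat.sInf_mem hne

lemma etw_le_of_cost_le (L : Fin (Fintype.card G.V) ≃ G.V) {k : ℕ}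
    (h : ∀ i, G.cost L i ≤ k) : G.etw ≤ k :=
  Nat.sInf_le ⟨L, h⟩

end FinMGraph

/-- If `e = {x,y}` is an edge of `G` whose endpoints `x` and `y` both have
vertex-degree two and edge-degree two, then `etw(G/e) ≤ etw(G)`, where `G/e` is obtained
by contracting `e`. -/
theorem etw_contract_le (G H : FinMGraph) (h : G.ContractStep H) :
    H.etw ≤ G.etw := by
  obtain ⟨x, y, e, hxy, -, hx, -, hy, φ, ψ, hφ, hφ_eq, hψ⟩ := h
  let c : G.Contraction H x y e := ⟨φ, ψ, hxy, hφ, hφ_eq, hψ⟩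
  obtain ⟨L, hL⟩ := G.exists_layout_cost_le_etw
  obtain ⟨L', hL'⟩ := c.exists_layout_cost_le hx.le hy.le L
  refine FinMGraph.etw_le_of_cost_le L' fun i => ?_
  obtain ⟨j, hj⟩ := hL' i
  exact hj.trans (hL j)
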